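/- arXiv:2209.12288 — 2 statements merged into one kernel-verified Lean document; each statement's English description precedes it below -/
import Mathlib

section
/- Let A, Â ∈ ℝ^{m×n}, and let I_1,...,I_s partition {1,...,m} and J_1,...,J_t partition {1,...,n}. Suppose that for all p, q: (a) ∑_{j∈J_q} A_{i,j} = ∑_{j∈J_q} Â_{i,j} and this value is independent of i ∈ I_p; (b) ∑_{i∈I_p} A_{i,j} = ∑_{i∈I_p} Â_{i,j} and this value is independent of j ∈ J_q. If x ∈ ℝ^n and x̂ is defined by block-averaging x over the partition {J_q} (x̂_j = (1/|J_q|)∑_{j'∈J_q} x_{j'} for j ∈ J_q), then for every i ∈ {1,...,m}, (Â x̂)_i = (1/|I_p|) ∑_{i'∈I_p} (A x)_{i'}, where I_p is the block containing i. -/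
/-!
`blockAvg κ` is self-adjoint for the pairing `∑ j, f j * g j` and sees only block sums, so in
`∑ j, Â i j * x̂ j` one may replace `Â i` by `A i` and move the averaging from `x` onto the row
`A i`. By stability, the `κ`-average of row `i` at `j` and the `ρ`-average of column `j` at `i` are
both the mean of `A` over the block `I_p × J_q`: each is constant along the other partition, hence
equal to its own average there, and the two double averages coincide. So
`∑ j, blockAvg κ (A i) j * x j` is the `ρ`-average of `A x` at `i`.
-/

open Finset

section

variable {ι ι' β γ K : Type*} [Fintype ι] [Fintype ι'] [DecidableEq β] [DecidableEq γ] [Field K]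

def blockAvg (κ : ι → β) (f : ι → K) (j : ι) : K :=
  (∑ j' ∈ univ.filter (fun j' => κ j' = κ j), f j') / #(univ.filter (fun j' => κ j' = κ j))

theorem blockAvg_congr_of_sum_eq {κ : ι → β} {f g : ι → K} {j : ι}
    (h : ∑ j' ∈ univ.filter (fun j' => κ j' = κ j), f j' =
      ∑ j' ∈ univ.filter (fun j' => κ j' = κ j), g j') :
    blockAvg κ f j = blockAvg κ g j := by
  rw [blockAvg, blockAvg, h]

theorem blockAvg_eq_self [CharZero K] {κ : ι → β} {f : ι → K} (j : ι)
    (hf : ∀ j₁ j₂, κ j₁ = κ j₂ → f j₁ = f j₂) :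
    blockAvg κ f j = f j := by
  have hcard : (#(univ.filter (fun j' => κ j' = κ j)) : K) ≠ 0 :=
    Nat.cast_ne_zero.mpr (card_ne_zero_of_mem (mem_filter.mpr ⟨mem_univ j, rfl⟩))
  rw [blockAvg, div_eq_iff hcard, sum_congr rfl fun j' hj' => hf j' j (mem_filter.mp hj').2,
    sum_const, nsmul_eq_mul, mul_comm]

theorem sum_mul_blockAvg_comm (κ : ι → β) (f g : ι → K) :
    ∑ j, f j * blockAvg κ g j = ∑ j, blockAvg κ f j * g j := by
  simp only [blockAvg, mul_div_assoc', mul_sum, sum_mul, sum_div]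
  refine sum_comm' (fun j j' => ?_) |>.trans (sum_congr rfl fun j' _ => sum_congr rfl fun j hj => ?_)
  · simp only [mem_filter, mem_univ, true_and, and_true]
    exact eq_comm
  · rw [(mem_filter.mp hj).2]
    ring

theorem blockAvg_sum_mul (ρ : ι → β) (A : ι → ι' → K) (x : ι' → K) (i : ι) :
    blockAvg ρ (fun i' => ∑ j, A i' j * x j) i = ∑ j, blockAvg ρ (fun i' => A i' j) i * x j := by
  simp only [blockAvg, sum_div, sum_mul, div_mul_eq_mul_div]
  exact sum_comm

theorem blockAvg_blockAvg_comm (ρ : ι → β) (κ : ι' → γ) (A : ι → ι' → K) (i : ι) (j : ι') :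
    blockAvg ρ (fun i' => blockAvg κ (A i') j) i =
      blockAvg κ (fun j' => blockAvg ρ (fun i' => A i' j') i) j := by
  simp only [blockAvg, ← sum_div, div_div]
  rw [sum_comm, mul_comm]

end

theorem stmt3_general {m n s t : ℕ} (A Ahat : Fin m → Fin n → ℝ)
    (ρ : Fin m → Fin s) (κ : Fin n → Fin t)
    (hrow : ∀ i i', ρ i = ρ i' → ∀ q,
      ∑ j ∈ Finset.univ.filter (fun j => κ j = q), A i j =
      ∑ j ∈ Finset.univ.filter (fun j => κ j = q), A i' j)
    (hrowhat : ∀ i q,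
      ∑ j ∈ Finset.univ.filter (fun j => κ j = q), A i j =
      ∑ j ∈ Finset.univ.filter (fun j => κ j = q), Ahat i j)
    (hcol : ∀ j j', κ j = κ j' → ∀ p,
      ∑ i ∈ Finset.univ.filter (fun i => ρ i = p), A i j =
      ∑ i ∈ Finset.univ.filter (fun i => ρ i = p), A i j')
    (x xhat : Fin n → ℝ)
    (hxhat : ∀ j, xhat j =
      (∑ j' ∈ Finset.univ.filter (fun j' => κ j' = κ j), x j') /
        (Finset.univ.filter (fun j' => κ j' = κ j)).card) :
    ∀ i, ∑ j, Ahat i j * xhat j =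
      (∑ i' ∈ Finset.univ.filter (fun i' => ρ i' = ρ i), ∑ j, A i' j * x j) /
        (Finset.univ.filter (fun i' => ρ i' = ρ i)).card := by
  intro i
  have row_eq_col : ∀ j, blockAvg κ (A i) j = blockAvg ρ (fun i' => A i' j) i := fun j => calc
    blockAvg κ (A i) j = blockAvg ρ (fun i' => blockAvg κ (A i') j) i :=
      (blockAvg_eq_self i fun i₁ i₂ h => blockAvg_congr_of_sum_eq (hrow i₁ i₂ h _)).symm
    _ = blockAvg κ (fun j' => blockAvg ρ (fun i' => A i' j') i) j := blockAvg_blockAvg_comm ..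
    _ = blockAvg ρ (fun i' => A i' j) i :=
      blockAvg_eq_self j fun j₁ j₂ h => blockAvg_congr_of_sum_eq (hcol j₁ j₂ h _)
  calc ∑ j, Ahat i j * xhat j = ∑ j, blockAvg κ (Ahat i) j * x j := by
        rw [show xhat = blockAvg κ x from funext hxhat, sum_mul_blockAvg_comm]
    _ = ∑ j, blockAvg κ (A i) j * x j := by
        simp only [blockAvg_congr_of_sum_eq (hrowhat i _).symm]
    _ = ∑ j, blockAvg ρ (fun i' => A i' j) i * x j := by simp only [row_eq_col]
    _ = blockAvg ρ (fun i' => ∑ j, A i' j * x j) i := (blockAvg_sum_mul ..).symm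

/-- Averaging lemma behind the WL-test argument: if the row/column block sums of
`A` and `Â` agree (and are constant on blocks), then `(Â x̂)_i` equals the
block-average of `(A x)` over the row block containing `i`. -/
theorem stmt3 {m n s t : ℕ} (A Ahat : Fin m → Fin n → ℝ)
    (ρ : Fin m → Fin s) (κ : Fin n → Fin t)
    (hρ : Function.Surjective ρ) (hκ : Function.Surjective κ)
    (hrow : ∀ i i', ρ i = ρ i' → ∀ q,
      ∑ j ∈ Finset.univ.filter (fun j => κ j = q), A i j =
      ∑ j ∈ Finset.univ.filter (fun j => κ j = q), A i' j)
    (hrowhat : ∀ i q,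
      ∑ j ∈ Finset.univ.filter (fun j => κ j = q), A i j =
      ∑ j ∈ Finset.univ.filter (fun j => κ j = q), Ahat i j)
    (hcol : ∀ j j', κ j = κ j' → ∀ p,
      ∑ i ∈ Finset.univ.filter (fun i => ρ i = p), A i j =
      ∑ i ∈ Finset.univ.filter (fun i => ρ i = p), A i j')
    (hcolhat : ∀ j p,
      ∑ i ∈ Finset.univ.filter (fun i => ρ i = p), A i j =
      ∑ i ∈ Finset.univ.filter (fun i => ρ i = p), Ahat i j)
    (x xhat : Fin n → ℝ)
    (hxhat : ∀ j, xhat j =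
      (∑ j' ∈ Finset.univ.filter (fun j' => κ j' = κ j), x j') /
        (Finset.univ.filter (fun j' => κ j' = κ j)).card) :
    ∀ i, ∑ j, Ahat i j * xhat j =
      (∑ i' ∈ Finset.univ.filter (fun i' => ρ i' = ρ i), ∑ j, A i' j * x j) /
        (Finset.univ.filter (fun i' => ρ i' = ρ i)).card :=
  stmt3_general A Ahat ρ κ hrow hrowhat hcol x xhat hxhat
end

section
/- The set {(A, b, c, l, u) : the LP min c^T x s.t. Ax ≤ b, l ≤ x ≤ u attains an objective value ≤ φ at some feasible point} is Borel measurable in ℝ^{m×n} × ℝ^m × ℝ^n × ℝ^n × ℝ^n, for every fixed φ ∈ ℝ. Consequently, the optimal objective value mapping Φ_obj(A,b,c,l,u) = inf{c^T x : Ax ≤ b, l ≤ x ≤ u} (with value +∞ on infeasible instances) is a Borel measurable function into ℝ ∪ {±∞}. -/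
/-!
Pairs `(p, x)` of LP data and a feasible point with `cᵀx ≤ φ` form a closed subset of
`LPData × ℝⁿ`. Projecting along the compact pieces of a σ-compact exhaustion of `ℝⁿ` writes
the sublevel set as a countable union of closed sets. The feasible set lies in the box
`[l, u]`, so it is compact and the infimum of the objective over it is attained unless the
set is empty; hence `{Φ_obj ≤ φ}` is that sublevel set for every real `φ`, and these sets
determine the measurability of an `EReal`-valued map.
-/

open Set

section Projection

variable {X Y : Type*} [TopologicalSpace X] [TopologicalSpace Y]

theorem IsClosed.isClosed_image_fst_inter_univ_prod {C : Set (X × Y)} (hC : IsClosed C)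
    {K : Set Y} (hK : IsCompact K) : IsClosed (Prod.fst '' (C ∩ univ ×ˢ K)) := by
  have := isCompact_iff_compactSpace.mp hK
  have hC' : IsClosed (Prod.map id Subtype.val ⁻¹' C : Set (X × K)) :=
    hC.preimage (by fun_prop)
  convert isClosedMap_fst_of_compactSpace _ hC' using 1
  ext x
  simp [and_comm]

theorem IsClosed.measurableSet_image_fst [SigmaCompactSpace Y] [MeasurableSpace X]
    [OpensMeasurableSpace X] {C : Set (X × Y)} (hC : IsClosed C) :
    MeasurableSet (Prod.fst '' C) := by
  have hC_eq : Prod.fst '' C = ⋃ k, Prod.fst '' (C ∩ univ ×ˢ compactCovering Y k) := by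
    rw [← image_iUnion, ← inter_iUnion, ← prod_iUnion, iUnion_compactCovering, univ_prod_univ,
      inter_univ]
  rw [hC_eq]
  exact .iUnion fun k =>
    (hC.isClosed_image_fst_inter_univ_prod (isCompact_compactCovering Y k)).measurableSet

end Projection

theorem IsCompact.sInf_image_coe_le_coe_iff {α : Type*} [TopologicalSpace α] {F : Set α}
    (hF : IsCompact F) {f : α → ℝ} (hf : ContinuousOn f F) (r : ℝ) :
    sInf ((fun x => (f x : EReal)) '' F) ≤ r ↔ ∃ x ∈ F, f x ≤ r := by
  refine ⟨fun h => ?_, fun ⟨x, hxF, hx⟩ => (sInf_le (mem_image_of_mem _ hxF)).trans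
    (EReal.coe_le_coe hx)⟩
  rcases F.eq_empty_or_nonempty with rfl | hne
  · simp at h
  obtain ⟨x₀, hx₀F, hmin⟩ := hF.exists_isMinOn hne hf
  have hx₀ : (f x₀ : EReal) ≤ sInf ((fun x => (f x : EReal)) '' F) :=
    le_sInf (forall_mem_image.2 fun x hx => EReal.coe_le_coe (hmin hx))
  exact ⟨x₀, hx₀F, EReal.coe_le_coe_iff.1 (hx₀.trans h)⟩

theorem EReal.measurable_of_measurableSet_le_coe {α : Type*} [MeasurableSpace α]
    {f : α → EReal} (hf : ∀ r : ℝ, MeasurableSet {a | f a ≤ r}) : Measurable f := by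
  refine measurable_of_Iic fun y => ?_
  induction y using EReal.rec with
  | bot =>
    have h_eq : f ⁻¹' Iic ⊥ = ⋂ k : ℕ, {a | f a ≤ (-k : ℝ)} := by
      ext a
      simp only [mem_preimage, mem_Iic, le_bot_iff, mem_iInter, mem_ofPred_eq,
        EReal.eq_bot_iff_forall_lt]
      refine ⟨fun h k => (h _).le, fun h y => ?_⟩
      obtain ⟨k, hk⟩ := exists_nat_gt (-y)
      exact (h k).trans_lt (EReal.coe_lt_coe_iff.2 (by linarith))
    rw [h_eq]
    exact .iInter fun k => hf _
  | coe r => exact hf r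
  | top => simp

section LinearProgram

variable {m n : ℕ}

def lpFeasibleSet (A : Fin m → Fin n → ℝ) (b : Fin m → ℝ) (l u : Fin n → ℝ) :
    Set (Fin n → ℝ) :=
  {x | (∀ i, ∑ j, A i j * x j ≤ b i) ∧ ∀ j, l j ≤ x j ∧ x j ≤ u j}

theorem isClosed_setOf_mem_lpFeasibleSet {X : Type*} [TopologicalSpace X]
    {A : X → Fin m → Fin n → ℝ} {b : X → Fin m → ℝ} {l u : X → Fin n → ℝ}
    (hA : Continuous A) (hb : Continuous b) (hl : Continuous l) (hu : Continuous u) :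
    IsClosed {q : X × (Fin n → ℝ) | q.2 ∈ lpFeasibleSet (A q.1) (b q.1) (l q.1) (u q.1)} := by
  simp only [lpFeasibleSet, mem_ofPred_eq]
  simp only [ofPred_and, ofPred_forall]
  exact (isClosed_iInter fun i => isClosed_le (by fun_prop) (by fun_prop)).inter
    (isClosed_iInter fun j => (isClosed_le (by fun_prop) (by fun_prop)).inter
      (isClosed_le (by fun_prop) (by fun_prop)))

theorem isCompact_lpFeasibleSet (A : Fin m → Fin n → ℝ) (b : Fin m → ℝ) (l u : Fin n → ℝ) :
    IsCompact (lpFeasibleSet A b l u) := by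
  have h_closed : IsClosed (lpFeasibleSet A b l u) :=
    (isClosed_setOf_mem_lpFeasibleSet (X := Unit) continuous_const continuous_const
      continuous_const continuous_const).preimage (Continuous.prodMk_right ())
  exact isCompact_Icc.of_isClosed_subset h_closed
    fun x hx => ⟨fun j => (hx.2 j).1, fun j => (hx.2 j).2⟩

abbrev LPData (m n : ℕ) : Type :=
  (Fin m → Fin n → ℝ) × (Fin m → ℝ) × (Fin n → ℝ) × (Fin n → ℝ) × (Fin n → ℝ)

theorem measurableSet_lpSublevel (φ : ℝ) :
    MeasurableSet {p : LPData m n |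
      ∃ x ∈ lpFeasibleSet p.1 p.2.1 p.2.2.2.1 p.2.2.2.2, ∑ j, p.2.2.1 j * x j ≤ φ} := by
  have h_closed : IsClosed ({q : LPData m n × (Fin n → ℝ) | ∑ j, q.1.2.2.1 j * q.2 j ≤ φ} ∩
      {q | q.2 ∈ lpFeasibleSet q.1.1 q.1.2.1 q.1.2.2.2.1 q.1.2.2.2.2}) :=
    (isClosed_le (by fun_prop) continuous_const).inter
      (isClosed_setOf_mem_lpFeasibleSet (A := fun p : LPData m n => p.1) (b := (·.2.1))
        (l := (·.2.2.2.1)) (u := (·.2.2.2.2)) (by fun_prop) (by fun_prop) (by fun_prop)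
        (by fun_prop))
  convert h_closed.measurableSet_image_fst using 1
  ext p
  simp [and_comm]

end LinearProgram

/-- For every `φ ∈ ℝ`, the set of LP data `(A,b,c,l,u)` admitting a feasible
point with objective value `≤ φ` is Borel measurable; consequently the optimal
objective value map `Φ_obj(A,b,c,l,u) = inf {cᵀx : Ax ≤ b, l ≤ x ≤ u}`
(with value `+∞` on infeasible instances, `−∞` on unbounded ones) is a Borel
measurable function into `ℝ ∪ {±∞}`. -/
theorem stmt11 {m n : ℕ} :
    (∀ φ : ℝ, MeasurableSet {p : (Fin m → Fin n → ℝ) × (Fin m → ℝ) × (Fin n → ℝ) ×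
        (Fin n → ℝ) × (Fin n → ℝ) |
      ∃ x : Fin n → ℝ, (∑ j, p.2.2.1 j * x j) ≤ φ ∧
        (∀ i, ∑ j, p.1 i j * x j ≤ p.2.1 i) ∧
        ∀ j, p.2.2.2.1 j ≤ x j ∧ x j ≤ p.2.2.2.2 j}) ∧
    Measurable (fun p : (Fin m → Fin n → ℝ) × (Fin m → ℝ) × (Fin n → ℝ) ×
        (Fin n → ℝ) × (Fin n → ℝ) =>
      sInf ((fun x : Fin n → ℝ => ((∑ j, p.2.2.1 j * x j : ℝ) : EReal)) ''
        {x | (∀ i, ∑ j, p.1 i j * x j ≤ p.2.1 i) ∧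
          ∀ j, p.2.2.2.1 j ≤ x j ∧ x j ≤ p.2.2.2.2 j})) := by
  refine ⟨fun φ => by simpa [lpFeasibleSet, and_comm] using measurableSet_lpSublevel φ,
    EReal.measurable_of_measurableSet_le_coe fun r => ?_⟩
  convert measurableSet_lpSublevel r using 1
  ext p
  exact (isCompact_lpFeasibleSet _ _ _ _).sInf_image_coe_le_coe_iff (by fun_prop) r
end
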